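/- arXiv:2511.14753 — 2 statements merged into one kernel-verified Lean document; each statement's English description precedes it below -/
import Mathlib

section
/- The delta-network approximation error does not accumulate: defining ŷ_t = ŷ_{t−1} + W·Δx_t with Δx_t the thresholded delta (Δx_t = x_t − x̂_{t−1} if |x_t − x̂_{t−1}| > Θ componentwise, else 0) and ŷ_0 = 0, x̂_0 = 0, one has ŷ_t = W·x̂_t for all t, and hence ‖ŷ_t − W·x_t‖_∞ ≤ ‖W‖_∞ · Θ for all t, where ‖W‖_∞ is the maximum absolute row sum of W. -/
/-! Since `Δx_t = x̂_t − x̂_{t−1}` componentwise, the recursion for `ŷ` telescopes to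
`ŷ_t = W·x̂_t`. The error `ŷ_t − W·x_t = W·(x̂_t − x_t)` is then controlled by the
tracking bound `|x̂_{i,t} − x_{i,t}| ≤ Θ`, which holds because `x̂_i` is only left behind
while `x_i` stays within `Θ` of it. -/

open Matrix

section Threshold

variable {Θ a b : ℝ}

theorem threshold_delta_eq_sub :
    (if Θ < |a - b| then a - b else 0) = (if Θ < |a - b| then a else b) - b := by
  split_ifs <;> simp

theorem abs_threshold_sub_le (hΘ : 0 ≤ Θ) :
    |(if Θ < |a - b| then a else b) - a| ≤ Θ := by
  split_ifs with h
  · simpa using hΘ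
  · rw [abs_sub_comm]
    exact le_of_not_gt h

end Threshold

theorem mulVec_eq_of_telescoping {ι κ R : Type*} [Fintype κ] [Ring R] (W : Matrix ι κ R)
    (z Δz : ℕ → κ → R) (y : ℕ → ι → R) (hz0 : z 0 = 0) (hy0 : y 0 = 0)
    (hΔz : ∀ t, Δz (t + 1) = z (t + 1) - z t) (hy : ∀ t, y (t + 1) = W *ᵥ Δz (t + 1) + y t) :
    ∀ t, y t = W *ᵥ z t
  | 0 => by rw [hy0, hz0, mulVec_zero]
  | t + 1 => by rw [hy, mulVec_eq_of_telescoping W z Δz y hz0 hy0 hΔz hy t, hΔz, mulVec_sub,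
      sub_add_cancel]

theorem abs_mulVec_le_rowSum_mul {ι κ : Type*} [Fintype κ] (W : Matrix ι κ ℝ) {v : κ → ℝ}
    {Θ : ℝ} (hv : ∀ j, |v j| ≤ Θ) (i : ι) : |(W *ᵥ v) i| ≤ (∑ j, |W i j|) * Θ :=
  calc |(W *ᵥ v) i| ≤ ∑ j, |W i j * v j| := Finset.abs_sum_le_sum_abs _ _
    _ ≤ ∑ j, |W i j| * Θ := Finset.sum_le_sum fun j _ => by
        rw [abs_mul]
        exact mul_le_mul_of_nonneg_left (hv j) (abs_nonneg _)
    _ = (∑ j, |W i j|) * Θ := (Finset.sum_mul ..).symm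

/-- The delta-network approximation error does not accumulate:
`ŷ_t = W·x̂_t` for all `t`, and hence `‖ŷ_t − W·x_t‖_∞ ≤ ‖W‖_∞·Θ`,
where `‖W‖_∞` is the maximum absolute row sum of `W`. -/
theorem stmt_4 (m n : ℕ) (hm : 0 < m) (W : Matrix (Fin m) (Fin n) ℝ)
    (Θ : ℝ) (hΘ : 0 ≤ Θ)
    (x xhat Δx : ℕ → Fin n → ℝ) (yhat : ℕ → Fin m → ℝ)
    (hx0 : x 0 = 0) (hxhat0 : xhat 0 = 0) (hyhat0 : yhat 0 = 0)
    (hxhat : ∀ t : ℕ, ∀ i : Fin n,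
      xhat (t + 1) i =
        if Θ < |x (t + 1) i - xhat t i| then x (t + 1) i else xhat t i)
    (hΔx : ∀ t : ℕ, ∀ i : Fin n,
      Δx (t + 1) i =
        if Θ < |x (t + 1) i - xhat t i| then x (t + 1) i - xhat t i else 0)
    (hyhat : ∀ t : ℕ, yhat (t + 1) = W.mulVec (Δx (t + 1)) + yhat t) :
    (∀ t : ℕ, yhat t = W.mulVec (xhat t)) ∧
    (∀ t : ℕ, ∀ i : Fin m,
      |yhat t i - W.mulVec (x t) i|
        ≤ (Finset.univ.sup' ⟨⟨0, hm⟩, Finset.mem_univ _⟩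
            (fun i' : Fin m => ∑ j : Fin n, |W i' j|)) * Θ) := by
  have hΔ : ∀ t, Δx (t + 1) = xhat (t + 1) - xhat t := fun t => funext fun i => by
    rw [hΔx, Pi.sub_apply, hxhat, threshold_delta_eq_sub]
  have hy := mulVec_eq_of_telescoping W xhat Δx yhat hxhat0 hyhat0 hΔ hyhat
  have htrack : ∀ t j, |(xhat t - x t) j| ≤ Θ := by
    rintro (_ | t) j
    · simpa [hx0, hxhat0] using hΘ
    · rw [Pi.sub_apply, hxhat]
      exact abs_threshold_sub_le hΘ
  refine ⟨hy, fun t i => ?_⟩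
  rw [hy, ← Pi.sub_apply (W *ᵥ xhat t), ← mulVec_sub]
  exact (abs_mulVec_le_rowSum_mul W (htrack t) i).trans <|
    mul_le_mul_of_nonneg_right (Finset.le_sup' (fun i' => ∑ j, |W i' j|) (Finset.mem_univ i)) hΘ
end

section
/- Weighted Tchebycheff scalarization can reach every Pareto optimal point: if x* ∈ X is Pareto optimal and z_i* < f_i(x) for all x ∈ X and all i, then choosing weights w_i = 1/(f_i(x*) − z_i*), the point x* is a minimizer of max_i w_i(f_i(x) − z_i*) over X, with optimal value 1. -/
/-! Each weighted term `w_i (f_i x* - z_i)` equals `1`. Were the scalarized value at some `x`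
below `1`, every `f_i x` would be below `f_i x*`, so `x` would dominate `x*`. -/

theorem exists_le_of_not_dominated {ι X : Type*} [Nonempty ι] {f : ι → X → ℝ} {xstar : X}
    (hpareto : ¬ ∃ x, (∀ i, f i x ≤ f i xstar) ∧ ∃ j, f j x < f j xstar) (x : X) :
    ∃ i, f i xstar ≤ f i x := by
  by_contra! hlt
  exact hpareto ⟨x, fun i => (hlt i).le, Classical.arbitrary ι, hlt _⟩

theorem one_le_one_div_sub_mul_sub {a b c : ℝ} (hc : c < a) (hab : a ≤ b) :
    1 ≤ 1 / (a - c) * (b - c) := by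
  rw [one_div_mul_eq_div, one_le_div (sub_pos.2 hc)]
  linarith

/-- Weighted Tchebycheff scalarization can reach every Pareto optimal point:
with weights `w_i = 1/(f_i(x*) − z_i*)`, the Pareto optimal point `x*` is a
minimizer of `max_i w_i(f_i(x) − z_i*)` over `X`, with optimal value `1`. -/
theorem stmt_11 {X : Type*} (k : ℕ) (hk : 0 < k)
    (f : Fin k → X → ℝ) (z : Fin k → ℝ)
    (hz : ∀ (x : X) (i : Fin k), z i < f i x)
    (xstar : X)
    (hpareto : ¬ ∃ x : X, (∀ i : Fin k, f i x ≤ f i xstar)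
        ∧ ∃ j : Fin k, f j x < f j xstar) :
    (Finset.univ.sup' ⟨⟨0, hk⟩, Finset.mem_univ _⟩
        (fun i : Fin k => (1 / (f i xstar - z i)) * (f i xstar - z i)) = 1)
    ∧ ∀ x : X,
        Finset.univ.sup' ⟨⟨0, hk⟩, Finset.mem_univ _⟩
            (fun i : Fin k => (1 / (f i xstar - z i)) * (f i xstar - z i))
          ≤ Finset.univ.sup' ⟨⟨0, hk⟩, Finset.mem_univ _⟩
              (fun i : Fin k => (1 / (f i xstar - z i)) * (f i x - z i)) := by
  have : Nonempty (Fin k) := ⟨⟨0, hk⟩⟩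
  have hweight (i : Fin k) : 1 / (f i xstar - z i) * (f i xstar - z i) = 1 :=
    one_div_mul_cancel (sub_pos.2 (hz xstar i)).ne'
  have hvalue : Finset.univ.sup' ⟨⟨0, hk⟩, Finset.mem_univ _⟩
      (fun i : Fin k => 1 / (f i xstar - z i) * (f i xstar - z i)) = 1 := by
    simp only [hweight]
    exact Finset.sup'_const _ _
  refine ⟨hvalue, fun x => ?_⟩
  rw [hvalue]
  obtain ⟨i, hi⟩ := exists_le_of_not_dominated hpareto x
  exact Finset.le_sup'_of_le _ (Finset.mem_univ i) (one_le_one_div_sub_mul_sub (hz xstar i) hi)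
end
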